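/- Let g : 𝔻 → ℂ be analytic with Re g(z) ≥ 0 for all z ∈ 𝔻, and let z₁, …, z_N ∈ 𝔻 be distinct with ν_i = g(z_i). Then the matrix with entries (ν_i + \overline{ν_k})/(1 - z_i \overline{z_k}) is positive semidefinite. -/

import Mathlib

/-!
On the unit circle `conj ζ = ζ⁻¹`, so Cauchy's formula reads `f w = ⨍ conj (k_w ζ) * f ζ` with
the Szegő kernel `k_w ζ = (1 - ζ * conj w)⁻¹`. For `h` holomorphic in the disc and continuous
on its closure, applying it to `h * B` with `B = ∑ k, x k * k_{z k}` gives
`∑ i k, conj (x i) * x k * h (z i) * k_{z k} (z i) = ⨍ ‖B ζ‖² * h ζ`, whose real part is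
nonnegative when `Re h ≥ 0` on the circle; the Pick form is twice that real part. A function `g`
on the open disc is handled through its dilations `g (t * ·)`, `t < 1`, letting `t → 1`, since
positive semidefinite matrices form a closed set.
-/

open Complex Metric Filter Real ComplexConjugate
open scoped ComplexOrder Matrix Topology

namespace Matrix

variable {n 𝕜 : Type*} [Fintype n] [RCLike 𝕜]

theorem isClosed_setOf_posSemidef : IsClosed {M : Matrix n n 𝕜 | M.PosSemidef} := by
  simp only [posSemidef_iff_dotProduct_mulVec, Set.ofPred_and, Set.ofPred_forall]
  refine (isClosed_eq ?_ continuous_id).inter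
    (isClosed_iInter fun x => isClosed_le continuous_const ?_)
  · exact continuous_id.matrix_conjTranspose
  · exact continuous_const.dotProduct (continuous_id.matrix_mulVec continuous_const)

theorem star_dotProduct_conjTranspose_mulVec (P : Matrix n n 𝕜) (x : n → 𝕜) :
    star x ⬝ᵥ Pᴴ *ᵥ x = star (star x ⬝ᵥ P *ᵥ x) := by
  rw [dotProduct_mulVec, ← star_mulVec, dotProduct_comm, dotProduct_star, dotProduct_comm]

theorem posSemidef_add_conjTranspose {P : Matrix n n 𝕜}
    (hP : ∀ x, 0 ≤ RCLike.re (star x ⬝ᵥ P *ᵥ x)) : (P + Pᴴ).PosSemidef := by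
  refine .of_dotProduct_mulVec_nonneg (by simp [IsHermitian, add_comm]) fun x => ?_
  rw [add_mulVec, dotProduct_add, star_dotProduct_conjTranspose_mulVec, RCLike.star_def,
    RCLike.add_conj]
  exact_mod_cast mul_nonneg zero_le_two (hP x)

end Matrix

theorem re_circleAverage_nonneg {F : ℂ → ℂ} {c : ℂ} {R : ℝ}
    (hF : ∀ ζ ∈ sphere c |R|, 0 ≤ (F ζ).re) : 0 ≤ (circleAverage F c R).re := by
  by_cases hint : CircleIntegrable F c R
  · rw [← reCLM_apply, ← reCLM.circleAverage_comp_comm hint]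
    exact circleAverage_nonneg_of_nonneg hF
  · simp [circleAverage.integral_undef hint]

noncomputable def szegoKernel (w ζ : ℂ) : ℂ := (1 - ζ * conj w)⁻¹

theorem one_sub_mul_conj_ne_zero {ζ w : ℂ} (hζ : ‖ζ‖ ≤ 1) (hw : ‖w‖ < 1) :
    1 - ζ * conj w ≠ 0 := by
  refine sub_ne_zero.2 fun h => ?_
  have : ‖ζ * conj w‖ < 1 := by
    rw [norm_mul, RCLike.norm_conj]
    exact mul_lt_one_of_nonneg_of_lt_one_right hζ (norm_nonneg _) hw
  simp [← h] at this

theorem differentiableOn_szegoKernel {w : ℂ} (hw : w ∈ ball (0 : ℂ) 1) :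
    DifferentiableOn ℂ (szegoKernel w) (closedBall 0 1) := by
  rw [mem_ball_zero_iff] at hw
  refine ((differentiableOn_const 1).sub (differentiableOn_id.mul_const _)).inv fun ζ hζ => ?_
  exact one_sub_mul_conj_ne_zero (mem_closedBall_zero_iff.1 hζ) hw

theorem conj_szegoKernel_of_mem_sphere {w ζ : ℂ} (hζ : ζ ∈ sphere (0 : ℂ) 1) :
    conj (szegoKernel w ζ) = ζ / (ζ - w) := by
  have hζ1 : ‖ζ‖ = 1 := mem_sphere_zero_iff_norm.1 hζ
  have hζ0 : ζ ≠ 0 := norm_ne_zero_iff.1 (by simp [hζ1])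
  rw [szegoKernel, map_inv₀, map_sub, map_one, map_mul, conj_conj, ← inv_eq_conj hζ1]
  field_simp

theorem circleAverage_conj_szegoKernel_mul {f : ℂ → ℂ} (hf : DiffContOnCl ℂ f (ball 0 1))
    {w : ℂ} (hw : w ∈ ball (0 : ℂ) 1) :
    circleAverage (fun ζ => conj (szegoKernel w ζ) * f ζ) 0 1 = f w := by
  rw [← abs_one] at hf hw
  rw [← hf.circleAverage_smul_div hw]
  refine circleAverage_congr_sphere fun ζ hζ => ?_
  rw [abs_one] at hζ
  simp [conj_szegoKernel_of_mem_sphere hζ]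

section Pick

variable {ι : Type*}

theorem star_dotProduct_mulVec_szegoKernel_eq_circleAverage [Fintype ι] {h : ℂ → ℂ}
    (hh : DiffContOnCl ℂ h (ball 0 1)) {z : ι → ℂ} (hz : ∀ i, z i ∈ ball (0 : ℂ) 1)
    (x : ι → ℂ) :
    star x ⬝ᵥ (Matrix.of fun i k => h (z i) * szegoKernel (z k) (z i)) *ᵥ x =
      circleAverage (fun ζ => ‖∑ k, x k * szegoKernel (z k) ζ‖ ^ 2 • h ζ) 0 1 := by
  set B : ℂ → ℂ := fun ζ => ∑ k, x k * szegoKernel (z k) ζ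
  have hB : DifferentiableOn ℂ B (closedBall 0 1) :=
    DifferentiableOn.fun_sum fun k _ => (differentiableOn_szegoKernel (hz k)).const_mul _
  have hhB : DiffContOnCl ℂ (fun ζ => h ζ * B ζ) (ball 0 1) := by
    simpa only [smul_eq_mul] using
      hh.smul (hB.mono closure_ball_subset_closedBall).diffContOnCl
  have hint : ∀ i ∈ Finset.univ, CircleIntegrable
      (fun ζ => conj (x i) * (conj (szegoKernel (z i) ζ) * (h ζ * B ζ))) 0 1 := by
    intro i _
    refine ContinuousOn.circleIntegrable zero_le_one
      (ContinuousOn.mono ?_ sphere_subset_closedBall)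
    refine continuousOn_const.mul ((continuous_conj.comp_continuousOn
      (differentiableOn_szegoKernel (hz i)).continuousOn).mul ?_)
    simpa [closure_ball (0 : ℂ) one_ne_zero] using hhB.continuousOn
  calc star x ⬝ᵥ (Matrix.of fun i k => h (z i) * szegoKernel (z k) (z i)) *ᵥ x
      = ∑ i, conj (x i) * (h (z i) * B (z i)) := by
        simp only [dotProduct, Matrix.mulVec, Matrix.of_apply, Pi.star_apply, RCLike.star_def,
          B, Finset.mul_sum]
        exact Finset.sum_congr rfl fun i _ => Finset.sum_congr rfl fun k _ => by ring
    _ = ∑ i, circleAverage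
          (fun ζ => conj (x i) * (conj (szegoKernel (z i) ζ) * (h ζ * B ζ))) 0 1 := by
        refine Finset.sum_congr rfl fun i _ => ?_
        rw [← circleAverage_conj_szegoKernel_mul hhB (hz i), ← smul_eq_mul,
          ← circleAverage_fun_smul]
        rfl
    _ = circleAverage (fun ζ => ‖B ζ‖ ^ 2 • h ζ) 0 1 := by
        rw [← circleAverage_fun_sum hint]
        refine circleAverage_congr_sphere fun ζ _ => ?_
        have hconj : ∑ i, conj (x i) * (conj (szegoKernel (z i) ζ) * (h ζ * B ζ)) =
            conj (B ζ) * B ζ * h ζ := by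
          simp only [B, map_sum, map_mul, Finset.sum_mul]
          exact Finset.sum_congr rfl fun i _ => by ring
        rw [hconj, conj_mul', Complex.real_smul]
        push_cast
        rfl

noncomputable def halfPlanePickMatrix (z ν : ι → ℂ) : Matrix ι ι ℂ :=
  Matrix.of fun i k => (ν i + conj (ν k)) / (1 - z i * conj (z k))

theorem continuous_halfPlanePickMatrix (z : ι → ℂ) :
    Continuous fun ν : ι → ℂ => halfPlanePickMatrix z ν :=
  continuous_pi fun i => continuous_pi fun k =>
    ((continuous_apply i).add (continuous_conj.comp (continuous_apply k))).div_const _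

theorem posSemidef_halfPlanePickMatrix_of_diffContOnCl [Fintype ι] {h : ℂ → ℂ}
    (hh : DiffContOnCl ℂ h (ball 0 1)) (hre : ∀ ζ ∈ sphere (0 : ℂ) 1, 0 ≤ (h ζ).re)
    {z : ι → ℂ} (hz : ∀ i, z i ∈ ball (0 : ℂ) 1) :
    (halfPlanePickMatrix z (h ∘ z)).PosSemidef := by
  set P := Matrix.of fun i k => h (z i) * szegoKernel (z k) (z i)
  have hP : halfPlanePickMatrix z (h ∘ z) = P + Pᴴ := by
    ext i k
    simp only [halfPlanePickMatrix, Function.comp_apply, Matrix.of_apply, szegoKernel,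
      Matrix.add_apply, Matrix.conjTranspose_apply, star_mul', RCLike.star_def, star_inv₀,
      star_sub, star_one, RingHomCompTriple.comp_apply, RingHom.id_apply, P]
    ring
  rw [hP]
  refine Matrix.posSemidef_add_conjTranspose fun x => ?_
  rw [RCLike.re_to_complex, star_dotProduct_mulVec_szegoKernel_eq_circleAverage hh hz x]
  refine re_circleAverage_nonneg fun ζ hζ => ?_
  rw [Complex.smul_re, smul_eq_mul]
  exact mul_nonneg (sq_nonneg _) (hre ζ (by simpa using hζ))

theorem posSemidef_halfPlanePickMatrix_comp_const_mul [Fintype ι] {g : ℂ → ℂ}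
    (hg : DifferentiableOn ℂ g (ball 0 1)) (hgre : ∀ w ∈ ball (0 : ℂ) 1, 0 ≤ (g w).re)
    {s : ℂ} (hs : ‖s‖ < 1) {z : ι → ℂ} (hz : ∀ i, z i ∈ ball (0 : ℂ) 1) :
    (halfPlanePickMatrix z fun i => g (s * z i)).PosSemidef := by
  have hmaps : ∀ w ∈ closedBall (0 : ℂ) 1, s * w ∈ ball (0 : ℂ) 1 := fun w hw => by
    rw [mem_ball_zero_iff, norm_mul]
    exact mul_lt_one_of_nonneg_of_lt_one_left (norm_nonneg _) hs (mem_closedBall_zero_iff.1 hw)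
  have hgs : DifferentiableOn ℂ (fun w => g (s * w)) (closedBall 0 1) :=
    hg.comp (differentiableOn_id.const_mul s) hmaps
  exact posSemidef_halfPlanePickMatrix_of_diffContOnCl
    (hgs.mono closure_ball_subset_closedBall).diffContOnCl
    (fun ζ hζ => hgre _ (hmaps ζ (sphere_subset_closedBall hζ))) hz

end Pick

theorem stmt_4_general (N : ℕ) (g : ℂ → ℂ)
    (hg : DifferentiableOn ℂ g {z : ℂ | ‖z‖ < 1})
    (hgre : ∀ z ∈ {z : ℂ | ‖z‖ < 1}, 0 ≤ (g z).re)
    (z : Fin N → ℂ) (hz : ∀ i, ‖z i‖ < 1)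
    (ν : Fin N → ℂ) (hν : ∀ i, ν i = g (z i)) :
    Matrix.PosSemidef (Matrix.of fun i k : Fin N =>
      (ν i + (starRingEnd ℂ) (ν k)) / (1 - z i * (starRingEnd ℂ) (z k))) := by
  have hdisc : {z : ℂ | ‖z‖ < 1} = ball 0 1 := by ext; simp
  rw [hdisc] at hg hgre
  have hzball : ∀ i, z i ∈ ball (0 : ℂ) 1 := by simpa using hz
  let M : ℝ → Matrix (Fin N) (Fin N) ℂ := fun t => halfPlanePickMatrix z fun i => g (t * z i)
  have hM : ∀ t ∈ Set.Ioo (-1 : ℝ) 1, (M t).PosSemidef := fun t ht =>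
    posSemidef_halfPlanePickMatrix_comp_const_mul hg hgre (by simpa [abs_lt] using ht) hzball
  have hcont : ContinuousAt M 1 := by
    refine (continuous_halfPlanePickMatrix z).continuousAt.comp_of_eq
      (continuousAt_pi.2 fun i => ?_) rfl
    exact ContinuousAt.comp_of_eq
      (hg.differentiableAt (isOpen_ball.mem_nhds (hzball i))).continuousAt (by fun_prop) (by simp)
  obtain rfl : ν = fun i => g (z i) := funext hν
  have hM_one : M 1 = halfPlanePickMatrix z fun i => g (z i) := by simp [M]
  rw [← halfPlanePickMatrix, ← hM_one]
  refine Matrix.isClosed_setOf_posSemidef.mem_of_tendsto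
    (hcont.tendsto.mono_left (nhdsWithin_le_nhds (s := Set.Iio 1))) ?_
  filter_upwards [Ioo_mem_nhdsLT (by norm_num : (-1 : ℝ) < 1)] using hM

/-- Half-plane Pick condition: if `g : 𝔻 → ℂ` is analytic with `Re g ≥ 0` on 𝔻 and
`ν i = g (z i)` at distinct `z i ∈ 𝔻`, then the matrix
`(ν i + conj (ν k)) / (1 - z i * conj (z k))` is positive semidefinite. -/
theorem stmt_4 (N : ℕ) (g : ℂ → ℂ)
    (hg : DifferentiableOn ℂ g {z : ℂ | ‖z‖ < 1})
    (hgre : ∀ z ∈ {z : ℂ | ‖z‖ < 1}, 0 ≤ (g z).re)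
    (z : Fin N → ℂ) (hz : ∀ i, ‖z i‖ < 1) (hzdist : Function.Injective z)
    (ν : Fin N → ℂ) (hν : ∀ i, ν i = g (z i)) :
    Matrix.PosSemidef (Matrix.of fun i k : Fin N =>
      (ν i + (starRingEnd ℂ) (ν k)) / (1 - z i * (starRingEnd ℂ) (z k))) :=
  stmt_4_general N g hg hgre z hz ν hν
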